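/- Under the same hypotheses, for each fixed s ∈ [a+1, b] the function t ↦ v(t,s) = u(t,s) - H_{ν-1}(t,s-1) is nonincreasing in t on [s, b], i.e., v(t,s) - v(t-1,s) ≤ 0 for s+1 ≤ t ≤ b. -/

import Mathlib

noncomputable def H (μ : ℝ) (t a : ℤ) : ℝ :=
  Real.Gamma ((t : ℝ) - a + μ) / (Real.Gamma ((t : ℝ) - a) * Real.Gamma (μ + 1))

noncomputable def xiBVP (ν : ℝ) (a b : ℤ) (α β γ δ : ℝ) : ℝ :=
  (β - α) * γ + α * γ * H (ν - 1) b a + α * δ * H (ν - 2) b a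

noncomputable def uG (ν : ℝ) (a b : ℤ) (α β γ δ : ℝ) (t s : ℤ) : ℝ :=
  (1 / xiBVP ν a b α β γ δ) *
    (α * γ * H (ν - 1) t a * H (ν - 1) b (s - 1)
      + α * δ * H (ν - 1) t a * H (ν - 2) b (s - 1)
      + (β - α) * γ * H (ν - 1) b (s - 1)
      + (β - α) * δ * H (ν - 2) b (s - 1))

noncomputable def vG (ν : ℝ) (a b : ℤ) (α β γ δ : ℝ) (t s : ℤ) : ℝ :=
  uG ν a b α β γ δ t s - H (ν - 1) t (s - 1)

noncomputable def GG (ν : ℝ) (a b : ℤ) (α β γ δ : ℝ) (t s : ℤ) : ℝ :=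
  if t ≤ s - 1 then uG ν a b α β γ δ t s else vG ν a b α β γ δ t s

/-!
The backward differences in `t` of `uG` and of `H (ν - 1) · (s - 1)` are `H (ν - 2)` terms, so the
claim reduces to `(αγ H_{ν-1}(b,s-1) + αδ H_{ν-2}(b,s-1)) H_{ν-2}(t,a) ≤ ξ H_{ν-2}(t,s-1)`.
Since `H μ t a = ∏_{k < t-a-1} (1 + μ/(k+1))`, the function `H μ` depends only on the gap `t - a`;
it grows with the gap for `μ ≥ 0`, and for `-1 < μ ≤ 0` it decreases and is log-convex in the gap
(the factors increase with `k`). These facts bound the `γ`- and `δ`-terms by those of `ξ`, and the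
remaining `(β - α)γ` term of `ξ` is nonnegative.
-/

open Finset

section DiscreteMonomial

variable {μ : ℝ} {a c c' t t' : ℤ}

lemma one_add_div_natCast_add_one_pos (hμ : -1 < μ) (k : ℕ) : 0 < 1 + μ / (k + 1) := by
  have hk : (1 : ℝ) ≤ k + 1 := by simp
  rw [one_add_div (by positivity)]
  exact div_pos (by linarith) (by linarith)

lemma H_add_one (hμ : -1 < μ) (h : a < t) : H μ (t + 1) a = H μ t a * (1 + μ / (t - a)) := by
  have hx : (1 : ℝ) ≤ t - a := by
    have : (a : ℝ) + 1 ≤ t := by exact_mod_cast h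
    linarith
  have hΓx : 0 < Real.Gamma (t - a) := Real.Gamma_pos_of_pos (by linarith)
  have hΓμ : 0 < Real.Gamma (μ + 1) := Real.Gamma_pos_of_pos (by linarith)
  simp only [H, Int.cast_add, Int.cast_one]
  rw [show (t : ℝ) + 1 - a + μ = (t - a + μ) + 1 by ring, show (t : ℝ) + 1 - a = (t - a) + 1 by ring,
    Real.Gamma_add_one (by linarith), Real.Gamma_add_one (by linarith)]
  field_simp

lemma H_eq_prod (hμ : -1 < μ) (h : a < t) :
    H μ t a = ∏ k ∈ range (t - a - 1).toNat, (1 + μ / (k + 1)) := by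
  obtain ⟨n, rfl⟩ : ∃ n : ℕ, t = a + 1 + n := ⟨(t - a - 1).toNat, by omega⟩
  rw [show (a + 1 + n - a - 1).toNat = n by omega]
  induction n with
  | zero =>
    have hΓμ : Real.Gamma (μ + 1) ≠ 0 := (Real.Gamma_pos_of_pos (by linarith)).ne'
    simp [H, add_comm (1 : ℝ) μ, hΓμ]
  | succ n ih =>
    rw [Nat.cast_succ, ← add_assoc, H_add_one hμ (by omega), ih (by omega), prod_range_succ]
    congr 3
    push_cast
    ring

lemma H_pos (hμ : -1 < μ) (h : a < t) : 0 < H μ t a := by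
  rw [H_eq_prod hμ h]
  exact prod_pos fun k _ ↦ one_add_div_natCast_add_one_pos hμ k

lemma H_sub_H_sub_one (hμ : 0 < μ) (h : a + 1 < t) :
    H μ t a - H μ (t - 1) a = H (μ - 1) t a := by
  have hx : (1 : ℝ) ≤ t - 1 - a := by
    have : (a : ℝ) + 2 ≤ t := by exact_mod_cast (show a + 2 ≤ t by omega)
    linarith
  have hΓx : 0 < Real.Gamma (t - 1 - a) := Real.Gamma_pos_of_pos (by linarith)
  have hΓxμ : 0 < Real.Gamma (t - 1 - a + μ) := Real.Gamma_pos_of_pos (by linarith)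
  have hΓμ : 0 < Real.Gamma μ := Real.Gamma_pos_of_pos hμ
  simp only [H, Int.cast_sub, Int.cast_one]
  rw [show (t : ℝ) - a + μ = (t - 1 - a + μ) + 1 by ring, show (t : ℝ) - a = (t - 1 - a) + 1 by ring,
    show (t : ℝ) - 1 - a + 1 + (μ - 1) = t - 1 - a + μ by ring, sub_add_cancel,
    Real.Gamma_add_one (by linarith), Real.Gamma_add_one (by linarith), Real.Gamma_add_one hμ.ne']
  field_simp
  ring

lemma H_antitoneOn (hμ : 0 ≤ μ) (t : ℤ) : AntitoneOn (H μ t) (Set.Iio t) := by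
  intro c hc c' hc' hcc'
  rw [H_eq_prod (by linarith) hc, H_eq_prod (by linarith) hc']
  refine prod_le_prod_of_subset_of_one_le (range_subset_range.2 (by omega))
    (fun k _ ↦ (one_add_div_natCast_add_one_pos (by linarith) k).le) fun k _ _ ↦ ?_
  exact le_add_of_nonneg_right (by positivity)

lemma H_monotoneOn (hμ : -1 < μ) (hμ₀ : μ ≤ 0) (t : ℤ) : MonotoneOn (H μ t) (Set.Iio t) := by
  intro c hc c' hc' hcc'
  rw [H_eq_prod hμ hc, H_eq_prod hμ hc']
  refine prod_le_prod_of_subset_of_le_one (range_subset_range.2 (by omega))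
    (fun k _ ↦ (one_add_div_natCast_add_one_pos hμ k).le) fun k _ _ ↦ ?_
  exact add_le_of_nonpos_right (div_nonpos_of_nonpos_of_nonneg hμ₀ (by positivity))

lemma H_mul_H_le_H_mul_H (hμ : -1 < μ) (hμ₀ : μ ≤ 0) (hc : c ≤ c') (ht : c' < t) (ht' : t ≤ t') :
    H μ t' c' * H μ t c ≤ H μ t' c * H μ t c' := by
  set f : ℕ → ℝ := fun k ↦ 1 + μ / (k + 1) with hf
  set m := (t - c' - 1).toNat
  set n := (t' - c' - 1).toNat
  set d := (c' - c).toNat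
  rw [H_eq_prod hμ (by omega : c' < t'), H_eq_prod hμ (by omega : c < t),
    H_eq_prod hμ (by omega : c < t'), H_eq_prod hμ ht,
    show (t - c - 1).toNat = m + d by omega, show (t' - c - 1).toNat = n + d by omega,
    prod_range_add, prod_range_add]
  have hf₀ (k : ℕ) : 0 ≤ f k := (one_add_div_natCast_add_one_pos hμ k).le
  have hf_mono : ∏ k ∈ range d, f (m + k) ≤ ∏ k ∈ range d, f (n + k) := by
    refine prod_le_prod (fun k _ ↦ hf₀ _) fun k _ ↦ ?_
    have hmn : ((m + k : ℕ) : ℝ) + 1 ≤ ((n + k : ℕ) : ℝ) + 1 := by gcongr; omega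
    have := div_le_div_of_nonneg_left (neg_nonneg.2 hμ₀) (by positivity) hmn
    rw [neg_div, neg_div] at this
    simp only [hf]
    linarith
  have hPP : 0 ≤ (∏ k ∈ range n, f k) * ∏ k ∈ range m, f k :=
    mul_nonneg (prod_nonneg fun k _ ↦ hf₀ k) (prod_nonneg fun k _ ↦ hf₀ k)
  linarith [mul_le_mul_of_nonneg_left hf_mono hPP]

end DiscreteMonomial

section GreenFunction

variable {ν α β γ δ : ℝ} {a b s t : ℤ}

lemma vG_sub_vG_sub_one (hν : 1 < ν) (hat : a + 1 < t) (hst : s < t) :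
    vG ν a b α β γ δ t s - vG ν a b α β γ δ (t - 1) s =
      (α * γ * H (ν - 1) b (s - 1) + α * δ * H (ν - 2) b (s - 1)) * H (ν - 2) t a
        / xiBVP ν a b α β γ δ - H (ν - 2) t (s - 1) := by
  have hta := H_sub_H_sub_one (μ := ν - 1) (by linarith) hat
  have hts := H_sub_H_sub_one (μ := ν - 1) (by linarith) (show s - 1 + 1 < t by omega)
  rw [show ν - 1 - 1 = ν - 2 by ring] at hta hts
  simp only [vG, uG]
  rw [← hta, ← hts]
  ring

lemma mul_H_le_H_mul_xiBVP (hν1 : 1 < ν) (hν2 : ν < 2) (hα : 0 ≤ α) (hγ : 0 ≤ γ) (hδ : 0 ≤ δ)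
    (hba : α ≤ β) (hsa : a + 1 ≤ s) (hst : s < t) (htb : t ≤ b) :
    (α * γ * H (ν - 1) b (s - 1) + α * δ * H (ν - 2) b (s - 1)) * H (ν - 2) t a ≤
      H (ν - 2) t (s - 1) * xiBVP ν a b α β γ δ := by
  have hlow : H (ν - 2) t a ≤ H (ν - 2) t (s - 1) :=
    H_monotoneOn (by linarith) (by linarith) t (show a < t by omega) (show s - 1 < t by omega)
      (by omega)
  have hup : H (ν - 1) b (s - 1) ≤ H (ν - 1) b a :=
    H_antitoneOn (by linarith) b (show a < b by omega) (show s - 1 < b by omega) (by omega)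
  have hγ_term : H (ν - 1) b (s - 1) * H (ν - 2) t a ≤ H (ν - 1) b a * H (ν - 2) t (s - 1) :=
    mul_le_mul hup hlow (H_pos (by linarith) (by omega)).le (H_pos (by linarith) (by omega)).le
  have hδ_term : H (ν - 2) b (s - 1) * H (ν - 2) t a ≤ H (ν - 2) b a * H (ν - 2) t (s - 1) :=
    H_mul_H_le_H_mul_H (by linarith) (by linarith) (by omega) (by omega) htb
  have hβ_term : 0 ≤ (β - α) * γ * H (ν - 2) t (s - 1) :=
    mul_nonneg (mul_nonneg (by linarith) hγ) (H_pos (by linarith) (by omega)).le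
  unfold xiBVP
  linarith [mul_le_mul_of_nonneg_left hγ_term (mul_nonneg hα hγ),
    mul_le_mul_of_nonneg_left hδ_term (mul_nonneg hα hδ)]

end GreenFunction

theorem v_antitone_general (ν : ℝ) (hν1 : 1 < ν) (hν2 : ν < 2) (a b : ℤ)
    (α β γ δ : ℝ) (hα : 0 ≤ α) (hγ : 0 ≤ γ) (hδ : 0 ≤ δ)
    (hba : α ≤ β) (hξ : 0 < xiBVP ν a b α β γ δ)
    (s : ℤ) (hsa : a + 1 ≤ s)
    (t : ℤ) (hts : s + 1 ≤ t) (htb : t ≤ b) :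
    vG ν a b α β γ δ t s - vG ν a b α β γ δ (t - 1) s ≤ 0 := by
  rw [vG_sub_vG_sub_one hν1 (by omega) (by omega), sub_nonpos]
  exact div_le_of_le_mul₀ hξ.le (H_pos (by linarith) (by omega)).le
    (mul_H_le_H_mul_xiBVP hν1 hν2 hα hγ hδ hba hsa (by omega) htb)

theorem v_antitone (ν : ℝ) (hν1 : 1 < ν) (hν2 : ν < 2) (a b : ℤ) (hab : a + 1 ≤ b)
    (α β γ δ : ℝ) (hα : 0 ≤ α) (hβ : 0 ≤ β) (hγ : 0 ≤ γ) (hδ : 0 ≤ δ)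
    (hba : α ≤ β) (hξ : 0 < xiBVP ν a b α β γ δ)
    (s : ℤ) (hsa : a + 1 ≤ s) (hsb : s ≤ b)
    (t : ℤ) (hts : s + 1 ≤ t) (htb : t ≤ b) :
    vG ν a b α β γ δ t s - vG ν a b α β γ δ (t - 1) s ≤ 0 :=
  v_antitone_general ν hν1 hν2 a b α β γ δ hα hγ hδ hba hξ s hsa t hts htb
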